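/- Let ℓ ≥ 1 and k ≥ 2 with (k,ℓ) ≠ (2,1), let i ∈ Fin k, and let v be a vertex of ST^ℓ_k with v 0 ≠ i. Then the set N(v) ∩ S_i of neighbors of v in S_i has exactly ℓ elements and is an independent set; consequently the subgraph of ST^ℓ_k induced on {v} ∪ (N(v) ∩ S_i) is isomorphic to the complete bipartite star K_{1,ℓ} with center v. -/

import Mathlib

/-- An ℓ-set permutation: a string of length `k * l` over the alphabet `Fin k`
in which every symbol occurs exactly `l` times. -/
abbrev LSetPerm (k l : ℕ) : Type :=
  {v : Fin (k * l) → Fin k // ∀ j : Fin k, (Finset.univ.filter fun x => v x = j).card = l}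

/-- The star ℓ-set transposition graph `ST^ℓ_k`: vertices are the ℓ-set permutations,
with `v` adjacent to `w` iff `w` is obtained from `v` by transposing the first entry
with an entry of differing value. -/
def STGraph (k l : ℕ) [NeZero (k * l)] : SimpleGraph (LSetPerm k l) :=
  SimpleGraph.fromRel fun v w =>
    ∃ h : Fin (k * l), h ≠ 0 ∧ v.1 h ≠ v.1 0 ∧ w.1 = v.1 ∘ (Equiv.swap 0 h)

/-- for `(k,ℓ) ≠ (2,1)` and a vertex `v` with `v 0 ≠ i`, the set
`N(v) ∩ S_i` has exactly `ℓ` elements and is independent, and the subgraph induced on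
`{v} ∪ (N(v) ∩ S_i)` is isomorphic to the star `K_{1,ℓ}` with center `v`. -/
theorem ST_dominating_lSet_star (k l : ℕ) (hl : 1 ≤ l) (hk : 2 ≤ k)
    (hne : ¬(k = 2 ∧ l = 1)) (i : Fin k) (v : LSetPerm k l) :
    letI : NeZero (k * l) := ⟨Nat.mul_ne_zero (by omega) (by omega)⟩
    v.1 0 ≠ i →
      ((STGraph k l).neighborSet v ∩ {w : LSetPerm k l | w.1 0 = i}).ncard = l ∧
      ((STGraph k l).neighborSet v ∩ {w : LSetPerm k l | w.1 0 = i}).Pairwise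
        (fun a b => ¬ (STGraph k l).Adj a b) ∧
      ∃ φ : (STGraph k l).induce
              ({v} ∪ ((STGraph k l).neighborSet v ∩ {w : LSetPerm k l | w.1 0 = i})) ≃g
            completeBipartiteGraph (Fin 1) (Fin l),
        φ ⟨v, Or.inl rfl⟩ = Sum.inl 0 := by
  haveI : NeZero (k * l) := ⟨Nat.mul_ne_zero (by omega) (by omega)⟩
  intro hv0
  classical
  set S : Set (LSetPerm k l) := {w : LSetPerm k l | w.1 0 = i} with hS
  set N : Set (LSetPerm k l) := (STGraph k l).neighborSet v ∩ S with hNdef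
  -- adjacent vertices have different first entries
  have adj_ne0 : ∀ a b : LSetPerm k l, (STGraph k l).Adj a b → a.1 0 ≠ b.1 0 := by
    rintro a b ⟨hne', ⟨h, h0, hva, hb⟩ | ⟨h, h0, hvb, ha⟩⟩
    · intro heq
      apply hva
      rw [hb] at heq
      simpa using heq.symm
    · intro heq
      apply hvb
      rw [ha] at heq
      simpa using heq
  -- characterization of N
  have mem_iff : ∀ w : LSetPerm k l,
      w ∈ N ↔ ∃ h : Fin (k * l), v.1 h = i ∧ w.1 = v.1 ∘ Equiv.swap 0 h := by
    intro w
    constructor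
    · rintro ⟨hadj, hwS⟩
      rw [SimpleGraph.mem_neighborSet] at hadj
      obtain ⟨hne', ⟨h, h0, hva, hb⟩ | ⟨h, h0, hwa, ha⟩⟩ := hadj
      · refine ⟨h, ?_, hb⟩
        have hwe : w.1 0 = v.1 h := by rw [hb]; simp
        rw [← hwe]; exact hwS
      · refine ⟨h, ?_, ?_⟩
        · have hve : v.1 h = w.1 0 := by rw [ha]; simp
          rw [hve]; exact hwS
        · funext x
          rw [ha]
          simp
    · rintro ⟨h, hvh, hw⟩
      have h0 : h ≠ 0 := by
        intro he; rw [he] at hvh; exact hv0 hvh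
      have hvne : v.1 h ≠ v.1 0 := by
        rw [hvh]; exact fun he => hv0 he.symm
      have hw0 : w.1 0 = i := by
        rw [hw]; simpa using hvh
      refine ⟨?_, hw0⟩
      rw [SimpleGraph.mem_neighborSet]
      refine ⟨?_, Or.inl ⟨h, h0, hvne, hw⟩⟩
      intro he
      apply hv0
      rw [he]
      exact hw0
  -- injectivity in h
  have inj : ∀ h1 h2 : Fin (k * l), v.1 h1 = i → v.1 h2 = i →
      (v.1 ∘ Equiv.swap 0 h1) = (v.1 ∘ Equiv.swap 0 h2) → h1 = h2 := by
    intro h1 h2 e1 e2 heq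
    by_contra hne12
    have h10 : h1 ≠ 0 := fun he => hv0 (he ▸ e1)
    have hc := congrFun heq h1
    simp only [Function.comp_apply, Equiv.swap_apply_right,
      Equiv.swap_apply_of_ne_of_ne h10 hne12] at hc
    exact hv0 (hc.trans e1)
  -- composing with a permutation preserves counts
  have perm_count : ∀ (e : Equiv.Perm (Fin (k * l))) (j : Fin k),
      (Finset.univ.filter fun x => v.1 (e x) = j).card = l := by
    intro e j
    have hcb : (Finset.univ.filter fun x => v.1 (e x) = j).card
        = (Finset.univ.filter fun x => v.1 x = j).card := by
      apply Finset.card_bij (fun x _ => e x)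
      · intro a ha
        simp only [Finset.mem_filter, Finset.mem_univ, true_and] at ha ⊢
        exact ha
      · intro a _ b _ hab
        exact e.injective hab
      · intro b hb
        refine ⟨e.symm b, ?_, by simp⟩
        simp only [Finset.mem_filter, Finset.mem_univ, true_and,
          Equiv.apply_symm_apply] at hb ⊢
        exact hb
    rw [hcb]
    exact v.2 j
  set W : Fin (k * l) → LSetPerm k l :=
    fun h => ⟨v.1 ∘ Equiv.swap 0 h, fun j => perm_count (Equiv.swap 0 h) j⟩ with hW
  have hNeq : N = W '' {h : Fin (k * l) | v.1 h = i} := by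
    ext w
    rw [mem_iff]
    constructor
    · rintro ⟨h, h1, h2⟩
      exact ⟨h, h1, Subtype.ext h2.symm⟩
    · rintro ⟨h, h1, rfl⟩
      exact ⟨h, h1, rfl⟩
  have hT : {h : Fin (k * l) | v.1 h = i}
      = ↑(Finset.univ.filter fun x => v.1 x = i) := by
    ext x; simp
  have hcard : N.ncard = l := by
    rw [hNeq, Set.ncard_image_of_injOn, hT, Set.ncard_coe_finset, v.2 i]
    intro a ha b hb hab
    exact inj a b ha hb (congrArg Subtype.val hab)
  have hindep : N.Pairwise fun a b => ¬ (STGraph k l).Adj a b := by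
    rintro a ⟨_, ha0⟩ b ⟨_, hb0⟩ hab hadj
    exact adj_ne0 a b hadj (ha0.trans hb0.symm)
  refine ⟨hcard, hindep, ?_⟩
  -- the isomorphism
  have hvnotN : v ∉ N := fun h => hv0 h.2
  haveI : Fintype ↥N := (Set.toFinite N).fintype
  have hcard' : Fintype.card ↥N = l := by
    rw [← Nat.card_eq_fintype_card, Nat.card_coe_set_eq, hcard]
  let e : ↥N ≃ Fin l := Fintype.equivFinOfCardEq hcard'
  set U : Set (LSetPerm k l) := {v} ∪ N with hU
  have mem_U_elim : ∀ x : ↥U, x.1 ∉ N → x.1 = v := by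
    rintro ⟨x, hx | hx⟩ h
    · exact hx
    · exact absurd hx h
  let toF : ↥U → Fin 1 ⊕ Fin l := fun x =>
    if h : x.1 ∈ N then Sum.inr (e ⟨x.1, h⟩) else Sum.inl 0
  let invF : Fin 1 ⊕ Fin l → ↥U := fun y =>
    Sum.rec (fun _ => ⟨v, Or.inl rfl⟩) (fun j => ⟨(e.symm j).1, Or.inr (e.symm j).2⟩) y
  have left : Function.LeftInverse invF toF := by
    intro x
    by_cases h : x.1 ∈ N
    · simp only [toF, dif_pos h, invF]
      apply Subtype.ext
      simp
    · simp only [toF, dif_neg h, invF]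
      exact Subtype.ext (mem_U_elim x h).symm
  have right : Function.RightInverse invF toF := by
    rintro (j | j)
    · simp only [invF, toF, dif_neg hvnotN]
      congr 1
      exact Subsingleton.elim _ _
    · simp only [invF, toF, dif_pos (e.symm j).2]
      congr 1
      simp
  have map_rel : ∀ a b : ↥U,
      (completeBipartiteGraph (Fin 1) (Fin l)).Adj (toF a) (toF b) ↔
        ((STGraph k l).induce U).Adj a b := by
    intro a b
    have hind : ((STGraph k l).induce U).Adj a b ↔ (STGraph k l).Adj a.1 b.1 := by
      simp [SimpleGraph.comap_adj]
    by_cases ha : a.1 ∈ N <;> by_cases hb : b.1 ∈ N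
    · have hnadj : ¬ (STGraph k l).Adj a.1 b.1 := by
        rcases eq_or_ne a.1 b.1 with heq | hne2
        · rw [heq]; exact (STGraph k l).irrefl
        · exact hindep ha hb hne2
      simp [toF, dif_pos ha, dif_pos hb, hind, hnadj]
    · have hb' := mem_U_elim b hb
      have hadj : (STGraph k l).Adj a.1 b.1 := hb' ▸ (ha.1).symm
      simp [toF, dif_pos ha, dif_neg hb, hind, hadj]
    · have ha' := mem_U_elim a ha
      have hadj : (STGraph k l).Adj a.1 b.1 := ha' ▸ hb.1
      simp [toF, dif_neg ha, dif_pos hb, hind, hadj]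
    · have ha' := mem_U_elim a ha
      have hb' := mem_U_elim b hb
      have hnadj : ¬ (STGraph k l).Adj a.1 b.1 := by
        rw [ha', hb']; exact (STGraph k l).irrefl
      simp [toF, dif_neg ha, dif_neg hb, hind, hnadj]
  refine ⟨⟨⟨toF, invF, left, right⟩, ?_⟩, ?_⟩
  · intro a b
    exact map_rel a b
  · show toF ⟨v, Or.inl rfl⟩ = Sum.inl 0
    simp [toF, dif_neg hvnotN]
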